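/- Let α ∈ (0,1), let ρ and σ be density matrices of the same size, each of rank at most r, let ε₁, δ₁, ε₂ ∈ (0,1), let p₁ be a real polynomial with |p₁(x)| ≤ 1 for all x ∈ [−1,1] and |p₁(x) − (δ₁^{1−α}/2)·x^{α−1}| ≤ ε₁ for all x ∈ [δ₁,1], and let p₂ be a real polynomial with |p₂(x)| ≤ 1 for all x ∈ [−1,1] and |p₂(x) − (1/2)x^{1−α}| ≤ ε₂ for all x ∈ [0,1]. Then the trace norm of p₂(σ) restricted to the support of σ is bounded as tr(Π·|p₂(σ)|) ≤ r·ε₂ + r^α/2, where Π is the orthogonal projection onto the range of σ; in particular, if ρ and σ are r×r matrices, then ‖p₂(σ)‖₁ ≤ r·ε₂ + r^α/2. -/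

import Mathlib

open Matrix Polynomial
open scoped ComplexOrder

/-- The matrix power `A^β` of a Hermitian matrix, via the spectral decomposition:
apply `t ↦ t^β` to the eigenvalues, with the convention `0^β = 0`. In particular
`matPow A 0` is the orthogonal projection onto the range of `A`.
(Junk value `0` if `A` is not Hermitian.) -/
noncomputable def matPow {n : Type*} [Fintype n] [DecidableEq n]
    (A : Matrix n n ℂ) (β : ℝ) : Matrix n n ℂ :=
  if hA : A.IsHermitian then hA.cfc (fun x => if x = 0 then 0 else x ^ β) else 0

/-- The matrix absolute value `|A| = √(Aᴴ A)`. -/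
noncomputable def matAbs {n : Type*} [Fintype n] [DecidableEq n] (A : Matrix n n ℂ) :
    Matrix n n ℂ :=
  (Matrix.posSemidef_conjTranspose_mul_self A).1.eigenvectorUnitary.1 *
    diagonal (((↑) : ℝ → ℂ) ∘ Real.sqrt ∘ (Matrix.posSemidef_conjTranspose_mul_self A).1.eigenvalues) *
    (star (Matrix.posSemidef_conjTranspose_mul_self A).1.eigenvectorUnitary : Matrix n n ℂ)

/-- The trace norm `‖A‖₁ = tr|A|`. -/
noncomputable def traceNorm {n : Type*} [Fintype n] [DecidableEq n] (A : Matrix n n ℂ) : ℝ :=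
  ((matAbs A).trace).re

/-! In the eigenbasis of `σ` both `Π` and `|p₂(σ)|` are diagonal, so the trace in question is
`∑ |p₂(λᵢ)|` over the at most `r` nonzero eigenvalues `λᵢ` of `σ`. Each term is at most
`ε₂ + λᵢ^(1-α)/2`, and by Hölder's inequality `∑ λᵢ^(1-α) ≤ r^α (∑ λᵢ)^(1-α) = r^α`. -/

lemma Finset.sum_rpow_le_card_rpow_mul_rpow_sum {ι : Type*} (s : Finset ι) {f : ι → ℝ}
    (hf : ∀ i, 0 ≤ f i) {β : ℝ} (hβ0 : 0 < β) (hβ1 : β ≤ 1) :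
    ∑ i ∈ s, f i ^ β ≤ (s.card : ℝ) ^ (1 - β) * (∑ i ∈ s, f i) ^ β := by
  have holder := Real.inner_le_weight_mul_Lp_of_nonneg s ((one_le_inv₀ hβ0).mpr hβ1)
    (fun _ => 1) (fun i => f i ^ β) (fun _ => zero_le_one) (fun i => Real.rpow_nonneg (hf i) β)
  simpa only [one_mul, inv_inv, Finset.sum_const, nsmul_eq_mul, mul_one,
    Real.rpow_rpow_inv (hf _) hβ0.ne'] using holder

lemma sum_abs_le_of_abs_sub_half_rpow_le {ι : Type*} (s : Finset ι) {r : ℕ} (hs : s.card ≤ r)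
    {w : ι → ℝ} (hw : ∀ i, 0 ≤ w i) (hsum : ∑ i ∈ s, w i ≤ 1) {α ε : ℝ} (hα0 : 0 ≤ α)
    (hα1 : α < 1) {f : ℝ → ℝ} (hf : ∀ x ∈ Set.Icc (0 : ℝ) 1, |f x - 1 / 2 * x ^ (1 - α)| ≤ ε) :
    ∑ i ∈ s, |f (w i)| ≤ r * ε + r ^ α / 2 := by
  have hε : 0 ≤ ε := (abs_nonneg _).trans (hf 0 ⟨le_rfl, zero_le_one⟩)
  have hw1 : ∀ i ∈ s, w i ≤ 1 := fun i hi =>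
    (Finset.single_le_sum (fun j _ => hw j) hi).trans hsum
  have hcard : (s.card : ℝ) ≤ r := by exact_mod_cast hs
  have hpow : ∑ i ∈ s, w i ^ (1 - α) ≤ (r : ℝ) ^ α :=
    calc ∑ i ∈ s, w i ^ (1 - α)
        ≤ (s.card : ℝ) ^ (1 - (1 - α)) * (∑ i ∈ s, w i) ^ (1 - α) :=
          s.sum_rpow_le_card_rpow_mul_rpow_sum hw (by linarith) (by linarith)
      _ ≤ (r : ℝ) ^ α * 1 := by
          rw [sub_sub_cancel]
          exact mul_le_mul (Real.rpow_le_rpow (Nat.cast_nonneg _) hcard hα0)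
            (Real.rpow_le_one (Finset.sum_nonneg fun i _ => hw i) hsum (by linarith))
            (Real.rpow_nonneg (Finset.sum_nonneg fun i _ => hw i) _) (by positivity)
      _ = (r : ℝ) ^ α := mul_one _
  calc ∑ i ∈ s, |f (w i)| ≤ ∑ i ∈ s, (ε + 1 / 2 * w i ^ (1 - α)) := by
        refine Finset.sum_le_sum fun i hi => ?_
        have := hf (w i) ⟨hw i, hw1 i hi⟩
        have := Real.rpow_nonneg (hw i) (1 - α)
        rw [abs_le] at *
        constructor <;> linarith
    _ = s.card * ε + (∑ i ∈ s, w i ^ (1 - α)) / 2 := by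
        rw [Finset.sum_add_distrib, Finset.sum_const, nsmul_eq_mul, ← Finset.mul_sum]
        ring
    _ ≤ r * ε + r ^ α / 2 := by gcongr

namespace Matrix

variable {𝕜 n : Type*} [RCLike 𝕜] [Fintype n] [DecidableEq n]

lemma continuousOn_spectrum (f : ℝ → ℝ) (A : Matrix n n 𝕜) : ContinuousOn f (spectrum ℝ A) :=
  Matrix.finite_real_spectrum.continuousOn f

lemma IsHermitian.trace_cfc {A : Matrix n n 𝕜} (hA : A.IsHermitian) (f : ℝ → ℝ) :
    (cfc f A).trace = ((∑ i, f (hA.eigenvalues i) : ℝ) : 𝕜) := by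
  rw [hA.cfc_eq, IsHermitian.cfc, Unitary.conjStarAlgAut_apply, trace_mul_cycle,
    Unitary.star_mul_self_of_mem (SetLike.coe_mem _), one_mul, trace_diagonal]
  simp

end Matrix

section

variable {n : Type*} [Fintype n] [DecidableEq n]

lemma matAbs_eq_cfc_sqrt (B : Matrix n n ℂ) :
    matAbs B = cfc Real.sqrt (Bᴴ * B) :=
  ((Matrix.posSemidef_conjTranspose_mul_self B).1.cfc_eq _).symm

lemma Matrix.IsHermitian.matAbs_eq_cfc_abs {B : Matrix n n ℂ} (hB : B.IsHermitian) :
    matAbs B = cfc (fun x : ℝ => |x|) B := by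
  have hsq : B * B = cfc (fun x : ℝ => x * x) B := by
    rw [cfc_mul (fun x => x) (fun x => x) B, cfc_id' ℝ B]
  rw [matAbs_eq_cfc_sqrt, hB.eq, hsq, ← cfc_comp' Real.sqrt (fun x => x * x) B]
  simp_rw [Real.sqrt_mul_self_eq_abs]

lemma matPow_eq_cfc {A : Matrix n n ℂ} (hA : A.IsHermitian) (β : ℝ) :
    matPow A β = cfc (fun x : ℝ => if x = 0 then 0 else x ^ β) A := by
  rw [matPow, dif_pos hA, ← hA.cfc_eq]

end

theorem trace_proj_abs_poly_le_general {n : Type*} [Fintype n] [DecidableEq n] (r : ℕ)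
    (α ε₂ : ℝ) (hα : α ∈ Set.Ioo (0 : ℝ) 1)
    (σ : Matrix n n ℂ)
    (hσ : σ.PosSemidef) (hσ1 : σ.trace = 1) (hσr : σ.rank ≤ r)
    (p₂ : Polynomial ℝ)
    (hp₂approx : ∀ x ∈ Set.Icc (0 : ℝ) 1, |p₂.eval x - (1 / 2) * x ^ (1 - α)| ≤ ε₂) :
    ((matPow σ 0 * matAbs (Polynomial.aeval σ p₂)).trace).re
        ≤ (r : ℝ) * ε₂ + (r : ℝ) ^ α / 2 ∧
      (Fintype.card n = r →
        traceNorm (Polynomial.aeval σ p₂) ≤ (r : ℝ) * ε₂ + (r : ℝ) ^ α / 2) := by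
  have hH := hσ.isHermitian
  have hsum : ∑ i, hH.eigenvalues i = 1 := by
    have htrace := hH.trace_eq_sum_eigenvalues
    rw [hσ1, ← RCLike.ofReal_sum] at htrace
    exact Complex.ofReal_eq_one.mp htrace.symm
  have hbound (s : Finset n) (hs : s.card ≤ r) :
      ∑ i ∈ s, |p₂.eval (hH.eigenvalues i)| ≤ r * ε₂ + r ^ α / 2 :=
    sum_abs_le_of_abs_sub_half_rpow_le s hs hσ.eigenvalues_nonneg
      ((Finset.sum_le_univ_sum_of_nonneg hσ.eigenvalues_nonneg).trans hsum.le) hα.1.le hα.2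
      hp₂approx
  have habs : matAbs (aeval σ p₂) = cfc (fun x => |p₂.eval x|) σ := by
    rw [← cfc_polynomial p₂ σ hH.isSelfAdjoint,
      (cfc_predicate p₂.eval σ).isHermitian.matAbs_eq_cfc_abs, ← cfc_comp' (|·|) p₂.eval σ]
  constructor
  · rw [matPow_eq_cfc hH, habs, ← cfc_mul _ _ σ (continuousOn_spectrum _ _), hH.trace_cfc]
    refine (Complex.ofReal_re _).trans_le <|
      le_of_eq_of_le ?_ (hbound {i | hH.eigenvalues i ≠ 0} ?_)
    · rw [Finset.sum_filter]
      exact Finset.sum_congr rfl fun i _ => by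
        rw [ite_mul, zero_mul, Real.rpow_zero, one_mul, ite_not]
    · rwa [← Fintype.card_subtype, ← hH.rank_eq_card_non_zero_eigs]
  · intro hcard
    rw [traceNorm, habs, hH.trace_cfc]
    exact (Complex.ofReal_re _).trans_le <| hbound Finset.univ (by rw [Finset.card_univ, hcard])

/-- With `Π = matPow σ 0` the orthogonal projection onto the range of `σ`,
`tr(Π |p₂(σ)|) ≤ r ε₂ + r^α/2`; in particular, if the matrices are `r × r`
(`Fintype.card n = r`), then `‖p₂(σ)‖₁ ≤ r ε₂ + r^α/2`. -/
theorem trace_proj_abs_poly_le {n : Type*} [Fintype n] [DecidableEq n] (r : ℕ)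
    (α ε₁ δ₁ ε₂ : ℝ) (hα : α ∈ Set.Ioo (0 : ℝ) 1)
    (hε₁ : ε₁ ∈ Set.Ioo (0 : ℝ) 1) (hδ₁ : δ₁ ∈ Set.Ioo (0 : ℝ) 1)
    (hε₂ : ε₂ ∈ Set.Ioo (0 : ℝ) 1)
    (ρ σ : Matrix n n ℂ)
    (hρ : ρ.PosSemidef) (hρ1 : ρ.trace = 1) (hρr : ρ.rank ≤ r)
    (hσ : σ.PosSemidef) (hσ1 : σ.trace = 1) (hσr : σ.rank ≤ r)
    (p₁ p₂ : Polynomial ℝ)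
    (hp₁bdd : ∀ x ∈ Set.Icc (-1 : ℝ) 1, |p₁.eval x| ≤ 1)
    (hp₁approx : ∀ x ∈ Set.Icc δ₁ 1, |p₁.eval x - δ₁ ^ (1 - α) / 2 * x ^ (α - 1)| ≤ ε₁)
    (hp₂bdd : ∀ x ∈ Set.Icc (-1 : ℝ) 1, |p₂.eval x| ≤ 1)
    (hp₂approx : ∀ x ∈ Set.Icc (0 : ℝ) 1, |p₂.eval x - (1 / 2) * x ^ (1 - α)| ≤ ε₂) :
    ((matPow σ 0 * matAbs (Polynomial.aeval σ p₂)).trace).re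
        ≤ (r : ℝ) * ε₂ + (r : ℝ) ^ α / 2 ∧
      (Fintype.card n = r →
        traceNorm (Polynomial.aeval σ p₂) ≤ (r : ℝ) * ε₂ + (r : ℝ) ^ α / 2) :=
  trace_proj_abs_poly_le_general r α ε₂ hα σ hσ hσ1 hσr p₂ hp₂approx
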